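/- Let c > 0 and let N be a non-negative integer. There exists a constant C = C(N, c) > 0 such that for every real H ≥ 1, every Lebesgue measurable set 𝒮 ⊆ [−c,c]², and every (ξ₁, ξ₂) ∈ ℝ² with max{|ξ₁|, |ξ₂|} > 0, the Fourier transforms W₊ and W₋ of w₊ and w₋ satisfy |W₊(ξ₁, ξ₂)| ≤ C·H^{2N}·max{|ξ₁|, |ξ₂|}^{−N} and |W₋(ξ₁, ξ₂)| ≤ C·H^{2N}·max{|ξ₁|, |ξ₂|}^{−N}. -/

import Mathlib

/-!
The weight `w₊` (resp. `w₋`) is the convolution of the indicator of `S₊` (resp. `S₋`) with the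
normalised Gaussian `(H²/π) e^{-H²‖x‖²}`, so its Fourier transform is the product of the Fourier
transform of the indicator, bounded by the area of the set, and that of the Gaussian,
`e^{-π²‖ξ‖²/H²}`. Both sets lie in a ball depending only on `c`, and the Gaussian factor beats
any power: with `s = π‖ξ‖/H` one has `s^N e^{-s²} ≤ N!`.
-/

open MeasureTheory

/-- `S₊`: the union of closed balls of radius `1/√H` centred at points of `S`. -/
noncomputable def Splus (H : ℝ) (S : Set (EuclideanSpace ℝ (Fin 2))) :
    Set (EuclideanSpace ℝ (Fin 2)) :=
  ⋃ x ∈ S, Metric.closedBall x (1 / Real.sqrt H)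

/-- `S₋`: the complement of the union of closed balls of radius `1/√H` centred
at points not in `S`. -/
noncomputable def Sminus (H : ℝ) (S : Set (EuclideanSpace ℝ (Fin 2))) :
    Set (EuclideanSpace ℝ (Fin 2)) :=
  (⋃ x ∈ Sᶜ, Metric.closedBall x (1 / Real.sqrt H))ᶜ

/-- The smoothed weight `w₊`. -/
noncomputable def wplus (H : ℝ) (S : Set (EuclideanSpace ℝ (Fin 2)))
    (x : EuclideanSpace ℝ (Fin 2)) : ℝ :=
  H ^ 2 / Real.pi * ∫ y in Splus H S, Real.exp (-(‖y - x‖ ^ 2 * H ^ 2))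

/-- The smoothed weight `w₋`. -/
noncomputable def wminus (H : ℝ) (S : Set (EuclideanSpace ℝ (Fin 2)))
    (x : EuclideanSpace ℝ (Fin 2)) : ℝ :=
  H ^ 2 / Real.pi * ∫ y in Sminus H S, Real.exp (-(‖y - x‖ ^ 2 * H ^ 2))

/-- The Fourier transform `W(ξ₁,ξ₂) = ∫ w(u,v) e^{−2πi(uξ₁ + vξ₂)} du dv` of a
function `w : ℝ² → ℝ`. -/
noncomputable def fourierW (w : EuclideanSpace ℝ (Fin 2) → ℝ) (ξ₁ ξ₂ : ℝ) : ℂ :=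
  ∫ y : EuclideanSpace ℝ (Fin 2),
    (w y : ℂ) * Complex.exp (-(2 * Real.pi * Complex.I * ((y 0 * ξ₁ + y 1 * ξ₂ : ℝ) : ℂ)))

open Metric Complex FourierTransform Convolution ContinuousLinearMap
open scoped RealInnerProductSpace Real

section Fourier

variable {E : Type*} [NormedAddCommGroup E] [InnerProductSpace ℝ E] [FiniteDimensional ℝ E]
  [MeasurableSpace E] [BorelSpace E]

theorem fourier_setIntegral_comp_sub_eq_mul {s : Set E} (hs : MeasurableSet s)
    (hfin : volume s ≠ ⊤) {g : E → ℂ} (hg : Integrable g) (ξ : E) :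
    𝓕 (fun x ↦ ∫ y in s, g (x - y)) ξ = 𝓕 (s.indicator (1 : E → ℂ)) ξ * 𝓕 g ξ := by
  have hconv : (fun x ↦ ∫ y in s, g (x - y)) = s.indicator 1 ⋆[mul ℂ ℂ] g := by
    ext x
    rw [convolution_def, ← integral_indicator hs]
    refine integral_congr_ae (.of_forall fun t ↦ ?_)
    by_cases ht : t ∈ s <;> simp [ht]
  rw [hconv, Real.fourier_mul_convolution_eq _ hg]
  exact (integrable_indicator_iff hs).2 (integrableOn_const hfin)

theorem norm_fourier_indicator_one_le {s : Set E} (hs : MeasurableSet s) (ξ : E) :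
    ‖𝓕 (s.indicator (1 : E → ℂ)) ξ‖ ≤ volume.real s := by
  refine (VectorFourier.norm_fourierIntegral_le_integral_norm _ _ _ _ _).trans_eq ?_
  rw [← integral_indicator_one hs]
  congr with v
  by_cases hv : v ∈ s <;> simp [hv]

theorem norm_fourier_setIntegral_comp_sub_le {s : Set E} (hs : volume s ≠ ⊤) {g : E → ℂ}
    (hg : Integrable g) (ξ : E) :
    ‖𝓕 (fun x ↦ ∫ y in s, g (x - y)) ξ‖ ≤ volume.real s * ‖𝓕 g ξ‖ := by
  -- `s` need not be measurable (think of `Splus`): the set integral only sees its measurable hull.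
  have ht : volume (toMeasurable volume s) = volume s := measure_toMeasurable s
  simp only [← Measure.restrict_toMeasurable hs]
  rw [fourier_setIntegral_comp_sub_eq_mul (measurableSet_toMeasurable _ _) (ht ▸ hs) hg,
    norm_mul, measureReal_def, ← ht, ← measureReal_def]
  gcongr
  exact norm_fourier_indicator_one_le (measurableSet_toMeasurable _ _) ξ

theorem norm_fourier_cexp_neg_mul_sq_norm {b : ℝ} (hb : 0 < b) (ξ : E) :
    ‖𝓕 (fun v : E ↦ cexp (-b * ‖v‖ ^ 2)) ξ‖ =
      (π / b) ^ (Module.finrank ℝ E / 2 : ℝ) * Real.exp (-π ^ 2 * ‖ξ‖ ^ 2 / b) := by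
  rw [fourier_gaussian_innerProductSpace (by simpa using hb), norm_mul, ← ofReal_div,
    norm_cpow_eq_rpow_re_of_pos (by positivity), norm_exp]
  congr 2
  · simp
  · norm_cast

end Fourier

local notation "ℝ²" => EuclideanSpace ℝ (Fin 2)

noncomputable def gaussianSmoothing (H : ℝ) (s : Set ℝ²) (x : ℝ²) : ℝ :=
  H ^ 2 / π * ∫ y in s, Real.exp (-(‖y - x‖ ^ 2 * H ^ 2))

theorem fourierW_eq_fourier (w : ℝ² → ℝ) (ξ₁ ξ₂ : ℝ) :
    fourierW w ξ₁ ξ₂ = 𝓕 (fun y ↦ (w y : ℂ)) !₂[ξ₁, ξ₂] := by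
  rw [fourierW, Real.fourier_eq']
  congr with y
  have hinner : ⟪y, !₂[ξ₁, ξ₂]⟫ = y 0 * ξ₁ + y 1 * ξ₂ := by
    simp [PiLp.inner_apply, Fin.sum_univ_two, mul_comm]
  rw [smul_eq_mul, mul_comm, hinner]
  push_cast
  ring_nf

theorem norm_fourierW_gaussianSmoothing_le {H : ℝ} (hH : H ≠ 0) {s : Set ℝ²}
    (hs : volume s ≠ ⊤) (ξ₁ ξ₂ : ℝ) :
    ‖fourierW (gaussianSmoothing H s) ξ₁ ξ₂‖ ≤
      volume.real s * Real.exp (-(π ^ 2 * (ξ₁ ^ 2 + ξ₂ ^ 2) / H ^ 2)) := by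
  have hH2 : 0 < H ^ 2 := by positivity
  set gauss : ℝ² → ℂ := fun v ↦ cexp (-(H ^ 2 : ℝ) * ‖v‖ ^ 2)
  set g : ℝ² → ℂ := ((H ^ 2 / π : ℝ) : ℂ) • gauss
  have hconv : (fun x ↦ (gaussianSmoothing H s x : ℂ)) =
      fun x ↦ ∫ y in s, g (x - y) := by
    ext x
    rw [gaussianSmoothing, ofReal_mul, ← integral_complex_ofReal, ← integral_const_mul]
    congr with y
    simp [g, gauss, norm_sub_rev x y, mul_comm]
  have hg : Integrable g := by
    refine Integrable.smul _ ?_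
    simpa only [zero_mul, add_zero] using GaussianFourier.integrable_cexp_neg_mul_sq_norm_add
      (b := ((H ^ 2 : ℝ) : ℂ)) (by rwa [ofReal_re]) 0 (0 : ℝ²)
  have hFg : ‖𝓕 g !₂[ξ₁, ξ₂]‖ = Real.exp (-(π ^ 2 * (ξ₁ ^ 2 + ξ₂ ^ 2) / H ^ 2)) := by
    rw [show 𝓕 g = ((H ^ 2 / π : ℝ) : ℂ) • 𝓕 gauss from
      VectorFourier.fourierIntegral_const_smul _ _ _ _ _, Pi.smul_apply, norm_smul,
      norm_fourier_cexp_neg_mul_sq_norm hH2, EuclideanSpace.real_norm_sq_eq, Fin.sum_univ_two,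
      finrank_euclideanSpace_fin, norm_real, Real.norm_of_nonneg (by positivity)]
    simp [field]
  rw [fourierW_eq_fourier, hconv, ← hFg]
  exact norm_fourier_setIntegral_comp_sub_le hs hg _

theorem pow_mul_exp_neg_sq_le_factorial (N : ℕ) {s : ℝ} (hs : 0 ≤ s) :
    s ^ N * Real.exp (-s ^ 2) ≤ N.factorial := by
  rcases le_total s 1 with h | h
  · calc s ^ N * Real.exp (-s ^ 2) ≤ 1 * 1 := by
          gcongr
          · exact pow_le_one₀ hs h
          · exact Real.exp_le_one_iff.2 (neg_nonpos.2 (sq_nonneg s))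
      _ ≤ N.factorial := by exact_mod_cast N.factorial_pos
  · have hpow : (s ^ 2) ^ N ≤ N.factorial * Real.exp (s ^ 2) :=
      (div_le_iff₀' (by positivity)).1 (Real.pow_div_factorial_le_exp _ (sq_nonneg s) N)
    calc s ^ N * Real.exp (-s ^ 2) ≤ (s ^ 2) ^ N * Real.exp (-s ^ 2) := by
          gcongr
          nlinarith
      _ ≤ N.factorial * Real.exp (s ^ 2) * Real.exp (-s ^ 2) := by gcongr
      _ = N.factorial := by
          rw [mul_assoc, ← Real.exp_add, add_neg_cancel, Real.exp_zero, mul_one]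

theorem exp_neg_pi_sq_mul_sq_div_sq_le (N : ℕ) {H M : ℝ} (hH : 1 ≤ H) (hM : 0 < M) :
    Real.exp (-(π ^ 2 * M ^ 2 / H ^ 2)) ≤ N.factorial * H ^ (2 * N) / M ^ N := by
  have hH0 : 0 < H := by linarith
  set s := π * M / H
  have hexp : π ^ 2 * M ^ 2 / H ^ 2 = s ^ 2 := by rw [div_pow, mul_pow]
  have hHπ : H / π ≤ H := div_le_self hH0.le (by linarith [Real.pi_gt_three])
  rw [le_div_iff₀ (pow_pos hM N), hexp]
  calc Real.exp (-s ^ 2) * M ^ N = s ^ N * Real.exp (-s ^ 2) * (H / π) ^ N := by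
        rw [mul_comm _ (Real.exp _), mul_assoc, ← mul_pow]
        congr 2
        simp only [s]
        field_simp
    _ ≤ N.factorial * H ^ N := by
        gcongr
        exact pow_mul_exp_neg_sq_le_factorial N (by positivity)
    _ ≤ N.factorial * H ^ (2 * N) := by
        gcongr N.factorial * ?_
        exact pow_le_pow_right₀ hH (by omega)

theorem norm_le_two_mul_of_forall_abs_le {y : ℝ²} {c : ℝ} (hy : ∀ i, |y i| ≤ c) :
    ‖y‖ ≤ 2 * c := by
  have h0 := hy 0
  have h1 := hy 1
  rw [EuclideanSpace.norm_eq, Fin.sum_univ_two, Real.sqrt_le_iff]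
  simp only [Real.norm_eq_abs, sq_abs]
  constructor
  · linarith [abs_nonneg (y 0)]
  · nlinarith [abs_nonneg (y 0), abs_nonneg (y 1), sq_abs (y 0), sq_abs (y 1)]

theorem Sminus_subset (H : ℝ) (S : Set ℝ²) : Sminus H S ⊆ S := fun z hz ↦ by
  by_contra hzS
  exact hz (Set.mem_biUnion hzS (mem_closedBall_self (by positivity)))

theorem Splus_subset_closedBall {H R : ℝ} (hH : 1 ≤ H) {S : Set ℝ²}
    (hS : S ⊆ closedBall 0 R) : Splus H S ⊆ closedBall 0 (R + 1) := by
  have hr : 1 / √H ≤ 1 := (div_le_one (by positivity)).2 (Real.one_le_sqrt.2 hH)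
  refine Set.iUnion₂_subset fun x hx ↦ closedBall_subset_closedBall' ?_
  linarith [mem_closedBall.1 (hS hx)]

theorem norm_fourierW_gaussianSmoothing_le_div_pow (N : ℕ) {H R : ℝ} (hH : 1 ≤ H)
    {s : Set ℝ²} (hs : s ⊆ closedBall 0 R) {ξ₁ ξ₂ : ℝ} (hξ : 0 < max |ξ₁| |ξ₂|) :
    ‖fourierW (gaussianSmoothing H s) ξ₁ ξ₂‖ ≤
      volume.real (closedBall (0 : ℝ²) R) * N.factorial * H ^ (2 * N) / max |ξ₁| |ξ₂| ^ N := by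
  have hfin : volume s ≠ ⊤ := ((measure_mono hs).trans_lt measure_closedBall_lt_top).ne
  have hmax : max |ξ₁| |ξ₂| ^ 2 ≤ ξ₁ ^ 2 + ξ₂ ^ 2 := by
    rcases max_choice |ξ₁| |ξ₂| with h | h <;> rw [h, sq_abs] <;>
      nlinarith [sq_nonneg ξ₁, sq_nonneg ξ₂]
  calc _ ≤ volume.real s * Real.exp (-(π ^ 2 * (ξ₁ ^ 2 + ξ₂ ^ 2) / H ^ 2)) :=
        norm_fourierW_gaussianSmoothing_le (by positivity) hfin ξ₁ ξ₂
    _ ≤ volume.real (closedBall (0 : ℝ²) R) *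
          Real.exp (-(π ^ 2 * max |ξ₁| |ξ₂| ^ 2 / H ^ 2)) := by
        gcongr
        exact measure_closedBall_lt_top.ne
    _ ≤ volume.real (closedBall (0 : ℝ²) R) *
          (N.factorial * H ^ (2 * N) / max |ξ₁| |ξ₂| ^ N) := by
        gcongr
        exact exp_neg_pi_sq_mul_sq_div_sq_le N hH hξ
    _ = _ := by ring

theorem fourier_weight_decay_general (c : ℝ) (N : ℕ) :
    ∃ C : ℝ, 0 < C ∧ ∀ H : ℝ, 1 ≤ H → ∀ S : Set (EuclideanSpace ℝ (Fin 2)),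
      MeasurableSet S → (∀ y ∈ S, ∀ i, |y i| ≤ c) →
      ∀ ξ₁ ξ₂ : ℝ, 0 < max |ξ₁| |ξ₂| →
        ‖fourierW (wplus H S) ξ₁ ξ₂‖ ≤ C * H ^ (2 * N) / max |ξ₁| |ξ₂| ^ N ∧
        ‖fourierW (wminus H S) ξ₁ ξ₂‖ ≤ C * H ^ (2 * N) / max |ξ₁| |ξ₂| ^ N := by
  set vol := volume.real (closedBall (0 : ℝ²) (2 * c + 1))
  refine ⟨(vol + 1) * N.factorial, by positivity, fun H hH S _ hSc ξ₁ ξ₂ hξ ↦ ?_⟩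
  have hS : S ⊆ closedBall 0 (2 * c) := fun y hy ↦
    mem_closedBall_zero_iff.2 (norm_le_two_mul_of_forall_abs_le (hSc y hy))
  have hbound : ∀ s ⊆ closedBall (0 : ℝ²) (2 * c + 1),
      ‖fourierW (gaussianSmoothing H s) ξ₁ ξ₂‖ ≤
        (vol + 1) * N.factorial * H ^ (2 * N) / max |ξ₁| |ξ₂| ^ N := fun s hs ↦
    (norm_fourierW_gaussianSmoothing_le_div_pow N hH hs hξ).trans (by gcongr; linarith)
  exact ⟨hbound _ (Splus_subset_closedBall hH hS),
    hbound _ ((Sminus_subset H S).trans (hS.trans (closedBall_subset_closedBall (by linarith))))⟩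

theorem fourier_weight_decay (c : ℝ) (hc : 0 < c) (N : ℕ) :
    ∃ C : ℝ, 0 < C ∧ ∀ H : ℝ, 1 ≤ H → ∀ S : Set (EuclideanSpace ℝ (Fin 2)),
      MeasurableSet S → (∀ y ∈ S, ∀ i, |y i| ≤ c) →
      ∀ ξ₁ ξ₂ : ℝ, 0 < max |ξ₁| |ξ₂| →
        ‖fourierW (wplus H S) ξ₁ ξ₂‖ ≤ C * H ^ (2 * N) / max |ξ₁| |ξ₂| ^ N ∧
        ‖fourierW (wminus H S) ξ₁ ξ₂‖ ≤ C * H ^ (2 * N) / max |ξ₁| |ξ₂| ^ N :=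
  fourier_weight_decay_general c N
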